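/- Let Bad_N := {x ∈ ℝ^N : ∃ c > 0 such that max_{1≤i≤N} ‖q·x_i‖ ≥ c·q^{−1/N} for all q ∈ ℕ}, where ‖·‖ denotes distance to the nearest integer. Let (ℝ^N,S,U,f) be any splitting structure on ℝ^N (with the sup-norm metric) such that d := dimH A_∞(B) > N−1 for the unit box B = [0,1]^N. Then Bad_N is ((d−N+1)/d)-Cantor-winning on B for this splitting structure. In particular, for the canonical splitting structure on ℝ^N the set Bad_N is (1/N)-Cantor-winning on B. -/

import Mathlib

open scoped Classical
open Filter Set

/-- A closed (metric) ball in a metric space, recorded by its centre and its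
(positive) radius. -/
structure SSBall (X : Type*) [MetricSpace X] where
  center : X
  radius : ℝ
  radius_pos : 0 < radius

namespace SSBall

variable {X : Type*} [MetricSpace X]

/-- The underlying set of points of a ball. -/
def toSet (B : SSBall X) : Set X := Metric.closedBall B.center B.radius

end SSBall

/-- A splitting structure `(X, S, U, f)` on a metric space `X`:
`U ⊆ ℕ` is an infinite multiplicatively closed set of positive integers, closed under
division of its elements; `f` is completely multiplicative on `U`; and `S` splits every
closed ball `B` into `f u` closed sub-balls of radius `rad(B)/u` whose centres are
`2 rad(B)/u`-separated, compatibly with multiplication in `U`. -/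
structure SplittingStructure (X : Type*) [MetricSpace X] where
  U : Set ℕ
  f : ℕ → ℕ
  S : SSBall X → ℕ → Finset (SSBall X)
  U_pos : ∀ u ∈ U, 0 < u
  U_infinite : U.Infinite
  mul_mem : ∀ u ∈ U, ∀ v ∈ U, u * v ∈ U
  div_mem : ∀ u ∈ U, ∀ v ∈ U, u ∣ v → v / u ∈ U
  f_pos : ∀ u ∈ U, 0 < f u
  f_mul : ∀ u ∈ U, ∀ v ∈ U, f (u * v) = f u * f v
  S_subset : ∀ B : SSBall X, ∀ u ∈ U, ∀ b ∈ S B u, b.toSet ⊆ B.toSet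
  S_radius : ∀ B : SSBall X, ∀ u ∈ U, ∀ b ∈ S B u, b.radius = B.radius / u
  S_card : ∀ B : SSBall X, ∀ u ∈ U, (S B u).card = f u
  S_sep : ∀ B : SSBall X, ∀ u ∈ U, ∀ b₁ ∈ S B u, ∀ b₂ ∈ S B u,
    b₁ ≠ b₂ → 2 * B.radius / u ≤ dist b₁.center b₂.center
  S_comp : ∀ B : SSBall X, ∀ u ∈ U, ∀ v ∈ U,
    S B (u * v) = (S B u).biUnion fun b => S b v

namespace SplittingStructure

variable {X : Type*} [MetricSpace X]

/-- `A_u(B)`, the union of the balls of `S(B,u)`. -/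
def Au (σ : SplittingStructure X) (B : SSBall X) (u : ℕ) : Set X :=
  ⋃ b ∈ σ.S B u, b.toSet

/-- The limit set `A_∞(B)`.  (For any sequence `(u_i)` in `U` with `u_i ∣ u_{i+1}` and
`u_i → ∞` the intersection `⋂_i A_{u_i}(B)` is independent of the sequence and coincides
with the intersection of all the sets `A_u(B)`, `u ∈ U`.) -/
def Ainfty (σ : SplittingStructure X) (B : SSBall X) : Set X :=
  ⋂ u ∈ σ.U, σ.Au B u

/-- A splitting structure is nontrivial if `f` is not identically `1` on `U`. -/
def Nontrivial (σ : SplittingStructure X) : Prop := ∃ u ∈ σ.U, σ.f u ≠ 1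

/-- `K` is a generalised `(B, ℛ, r)`-Cantor set for the splitting structure `σ`:
it arises from the iterative construction that starts with `𝓑 0 = {B}`, and in which
`𝓑 (n+1)` is obtained from the collection of candidate balls
`I_{n+1} = ⋃_{B' ∈ 𝓑 n} S(B', R n)` by removing, for each `k = 0, …, n` and each ball
`B'' ∈ 𝓑 (n-k)`, at most `r (n-k) n` balls lying in `S(B'', R_{n-k} ⋯ R_n)`
(the balls removed at stage `k` form the collection `E k`). -/
def IsGenCantor (σ : SplittingStructure X) (B : SSBall X) (R : ℕ → ℕ)
    (r : ℕ → ℕ → ℝ) (K : Set X) : Prop :=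
  ∃ 𝓑 : ℕ → Finset (SSBall X),
    𝓑 0 = {B} ∧
    (∀ n : ℕ, ∃ E : ℕ → Finset (SSBall X),
      (∀ k ≤ n, E k ⊆ (𝓑 (n - k)).biUnion fun B'' =>
          σ.S B'' (∏ i ∈ Finset.range (k + 1), R (n - i))) ∧
      (∀ k ≤ n, ∀ B'' ∈ 𝓑 (n - k),
        ((E k ∩ σ.S B'' (∏ i ∈ Finset.range (k + 1), R (n - i))).card : ℝ)
          ≤ r (n - k) n) ∧
      𝓑 (n + 1) = ((𝓑 n).biUnion fun B' => σ.S B' (R n)) \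
          (Finset.range (n + 1)).biUnion E) ∧
    K = ⋂ n, ⋃ b ∈ 𝓑 n, b.toSet

/-- `E` is `ε₀`-Cantor-winning on the ball `B` for the splitting structure `σ`. -/
def CantorWinningOn (σ : SplittingStructure X) (ε₀ : ℝ) (B : SSBall X)
    (E : Set X) : Prop :=
  ∀ ε : ℝ, 0 < ε → ε < ε₀ → ∃ Rε ∈ σ.U, ∀ R ∈ σ.U, Rε ≤ R →
    ∃ K : Set X,
      σ.IsGenCantor B (fun _ => R)
        (fun m n => (σ.f R : ℝ) ^ (((n : ℝ) - (m : ℝ) + 1) * (1 - ε))) K ∧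
      K ⊆ E

/-- `E` is `ε₀`-Cantor-winning for `σ` if it is `ε₀`-Cantor-winning on every ball. -/
def CantorWinning (σ : SplittingStructure X) (ε₀ : ℝ) (E : Set X) : Prop :=
  ∀ B : SSBall X, σ.CantorWinningOn ε₀ B E

end SplittingStructure

/-- Condition (S4) with an explicit constant `C`: no closed ball of `X` intersects more
than `C` pairwise disjoint open balls of the same radius as itself. -/
def CondS4With (X : Type*) [MetricSpace X] (C : ℕ) : Prop :=
  ∀ (x : X) (ρ : ℝ), 0 < ρ → ∀ T : Finset X,
    (∀ y ∈ T, (Metric.ball y ρ ∩ Metric.closedBall x ρ).Nonempty) →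
    (T : Set X).PairwiseDisjoint (fun y => Metric.ball y ρ) →
    T.card ≤ C

/-- Condition (S4). -/
def CondS4 (X : Type*) [MetricSpace X] : Prop := ∃ C : ℕ, CondS4With X C

/-- Condition (S5): for each `K > 1` there is a constant `C(K,X)` such that no ball of
radius `K·ρ` intersects more than `C(K,X)` pairwise disjoint open balls of radius `ρ`. -/
def CondS5 (X : Type*) [MetricSpace X] : Prop :=
  ∀ K : ℝ, 1 < K → ∃ C : ℕ, ∀ (x : X) (ρ : ℝ), 0 < ρ → ∀ T : Finset X,
    (∀ y ∈ T, (Metric.ball y ρ ∩ Metric.closedBall x (K * ρ)).Nonempty) →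
    (T : Set X).PairwiseDisjoint (fun y => Metric.ball y ρ) →
    T.card ≤ C

/-- The distance from a real number to the nearest integer, `‖x‖`. -/
noncomputable def intDist (x : ℝ) : ℝ := |x - round x|

/-- The set `Bad_N` of badly approximable points of `ℝ^N`: those `x` for which there is
`c > 0` with `max_{1 ≤ i ≤ N} ‖q xᵢ‖ ≥ c q^{-1/N}` for every positive integer `q`. -/
def badN (N : ℕ) : Set (Fin N → ℝ) :=
  {x | ∃ c : ℝ, 0 < c ∧ ∀ q : ℕ, 0 < q →
    ∃ i : Fin N, c * (q : ℝ) ^ (-(1 : ℝ) / (N : ℝ)) ≤ intDist ((q : ℝ) * x i)}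

/-- The unit box `[0,1]^N`, as a ball for the sup-norm metric on `ℝ^N`. -/
noncomputable def unitBox (N : ℕ) : SSBall (Fin N → ℝ) :=
  ⟨fun _ => (1 : ℝ) / 2, 1 / 2, by norm_num⟩

/-- The subbox of the box `B ⊆ ℝ^N` indexed by `i : Fin N → Fin u`, obtained when `B`
is cut into `u ^ N` equal subboxes. -/
noncomputable def canonicalPieceRN (N : ℕ) (B : SSBall (Fin N → ℝ)) (u : ℕ)
    (hu : 0 < u) (i : Fin N → Fin u) : SSBall (Fin N → ℝ) where
  center := fun j => B.center j - B.radius + (2 * ((i j : ℕ) : ℝ) + 1) * (B.radius / u)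
  radius := B.radius / u
  radius_pos := div_pos B.radius_pos (by exact_mod_cast hu)

/-- The canonical splitting structure on `ℝ^N`: `U = ℕ_{>0}`, `f u = u ^ N`, and
`S(B, u)` cuts the box `B` into `u ^ N` equal subboxes. -/
def IsCanonicalRN (N : ℕ) (σ : SplittingStructure (Fin N → ℝ)) : Prop :=
  σ.U = {u : ℕ | 0 < u} ∧
  (∀ u : ℕ, 0 < u → σ.f u = u ^ N) ∧
  ∀ (B : SSBall (Fin N → ℝ)) (u : ℕ) (hu : 0 < u),
    σ.S B u = Finset.image (canonicalPieceRN N B u hu) Finset.univ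

open scoped Topology MeasureTheory

/-!
Fix a large `R ∈ U` and build the Cantor set by splitting every ball of generation `n` (radius
`R^(-n)/2`) into the `f(R)` balls of `S(B, R)`, discarding those that meet the
`R^(-3) q^(-(N+1)/N)/2`-neighbourhood of a rational point `p/q` with `q^((N+1)/N)` in the window
`[R^(n-2), R^(n-1))`. Every point that survives all stages is badly approximable with constant
`R^(-3)/2`. By the simplex lemma the rational points of one window near a ball of generation `n`
lie on an affine hyperplane, so each ball loses at most `(3N+1)(R+1)^(N-1)` of its children.
The dimension hypothesis forces `f(R) ≥ R^d`, and `d(1-ε) > N-1` turns this loss into at most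
`f(R)^(1-ε)` for large `R`.
-/

/-! ### Counting separated points near a hyperplane -/

lemma abs_sub_lt_one_of_natFloor_eq {a b : ℝ} (ha : 0 ≤ a) (hb : 0 ≤ b) (h : ⌊a⌋₊ = ⌊b⌋₊) :
    |a - b| < 1 :=
  Int.abs_sub_lt_one_of_floor_eq_floor <| by
    rw [← Int.natCast_floor_eq_floor ha, ← Int.natCast_floor_eq_floor hb, h]

lemma card_le_of_separated {s : Finset ℝ} {δ L : ℝ} (hδ : 0 < δ) (hL : 0 ≤ L)
    (hsep : ∀ x ∈ s, ∀ y ∈ s, x ≠ y → δ ≤ |x - y|)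
    (hdiam : ∀ x ∈ s, ∀ y ∈ s, |x - y| ≤ L) :
    (s.card : ℝ) ≤ L / δ + 1 := by
  rcases s.eq_empty_or_nonempty with rfl | hs
  · simp only [Finset.card_empty, Nat.cast_zero]; positivity
  set x₀ := s.min' hs
  have hinj : Set.InjOn (fun x => ⌊(x - x₀) / δ⌋₊) s := by
    intro x hx y hy hxy
    by_contra hne
    have h := abs_sub_lt_one_of_natFloor_eq
      (div_nonneg (sub_nonneg.2 (s.min'_le x hx)) hδ.le)
      (div_nonneg (sub_nonneg.2 (s.min'_le y hy)) hδ.le) hxy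
    rw [← sub_div, sub_sub_sub_cancel_right, abs_div, abs_of_pos hδ, div_lt_one hδ] at h
    exact (hsep x hx y hy hne).not_gt h
  have hmaps : Set.MapsTo (fun x => ⌊(x - x₀) / δ⌋₊) s (Finset.range (⌊L / δ⌋₊ + 1)) := by
    intro x hx
    refine Finset.mem_range_succ_iff.2 (Nat.floor_le_floor (div_le_div_of_nonneg_right ?_ hδ.le))
    exact (le_abs_self _).trans (hdiam x hx x₀ (s.min'_mem hs))
  calc (s.card : ℝ) ≤ (⌊L / δ⌋₊ + 1 : ℕ) := by
        exact_mod_cast (Finset.card_le_card_of_injOn _ hmaps hinj).trans_eq (Finset.card_range _)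
    _ ≤ L / δ + 1 := by push_cast; linarith [Nat.floor_le (div_nonneg hL hδ.le)]

lemma exists_inv_le_abs_of_sum_abs_eq_one {N : ℕ} (hN : 0 < N) {a : Fin N → ℝ}
    (ha : ∑ i, |a i| = 1) : ∃ j, 1 / (N : ℝ) ≤ |a j| := by
  obtain ⟨j, -, hj⟩ := Finset.exists_le_of_sum_le (s := Finset.univ) (f := fun _ => 1 / (N : ℝ))
    (g := fun i => |a i|) ⟨⟨0, hN⟩, Finset.mem_univ _⟩ (by simp [ha, (Nat.cast_pos.2 hN).ne'])
  exact ⟨j, hj⟩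

lemma abs_sub_le_of_mem_slab {N : ℕ} {a : Fin N → ℝ} (ha : ∑ i, |a i| = 1) {j : Fin N}
    (hj : 1 / (N : ℝ) ≤ |a j|) {t w δ : ℝ} (hδ : 0 ≤ δ) {x y : Fin N → ℝ}
    (hx : |∑ i, a i * x i - t| ≤ w) (hy : |∑ i, a i * y i - t| ≤ w)
    (hclose : ∀ i ≠ j, |x i - y i| ≤ δ) :
    |x j - y j| ≤ N * (2 * w + δ) := by
  have hrest : |∑ i ∈ Finset.univ.erase j, a i * (x i - y i)| ≤ δ := calc
    _ ≤ ∑ i ∈ Finset.univ.erase j, |a i| * δ := by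
      refine (Finset.abs_sum_le_sum_abs _ _).trans (Finset.sum_le_sum fun i hi => ?_)
      rw [abs_mul]
      exact mul_le_mul_of_nonneg_left (hclose i (Finset.ne_of_mem_erase hi)) (abs_nonneg _)
    _ ≤ ∑ i, |a i| * δ :=
      Finset.sum_le_sum_of_subset_of_nonneg (Finset.erase_subset _ _) fun _ _ _ => by positivity
    _ = δ := by rw [← Finset.sum_mul, ha, one_mul]
  have hsplit : a j * (x j - y j) = (∑ i, a i * x i - t) - (∑ i, a i * y i - t)
      - ∑ i ∈ Finset.univ.erase j, a i * (x i - y i) := by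
    rw [sub_sub_sub_cancel_right, ← Finset.sum_sub_distrib,
      ← Finset.add_sum_erase _ _ (Finset.mem_univ j)]
    simp only [mul_sub, add_sub_cancel_right]
  have hmain : |a j| * |x j - y j| ≤ 2 * w + δ := by
    rw [← abs_mul, hsplit]
    linarith [abs_sub (∑ i, a i * x i - t - (∑ i, a i * y i - t))
      (∑ i ∈ Finset.univ.erase j, a i * (x i - y i)),
      abs_sub (∑ i, a i * x i - t) (∑ i, a i * y i - t)]
  have hNa : 1 ≤ N * |a j| := by rwa [div_le_iff₀' (Nat.cast_pos.2 j.pos)] at hj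
  nlinarith [abs_nonneg (x j - y j)]

lemma card_le_of_separated_in_tube {N : ℕ} {a : Fin N → ℝ} (ha : ∑ i, |a i| = 1) {j : Fin N}
    (hj : 1 / (N : ℝ) ≤ |a j|) {t ρ : ℝ} (hρ : 0 < ρ) {s : Finset (Fin N → ℝ)}
    (hsep : ∀ x ∈ s, ∀ y ∈ s, x ≠ y → 2 * ρ ≤ dist x y)
    (hclose : ∀ x ∈ s, ∀ y ∈ s, ∀ i ≠ j, |x i - y i| < 2 * ρ)
    (hslab : ∀ x ∈ s, |∑ i, a i * x i - t| ≤ 2 * ρ) :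
    s.card ≤ 3 * N + 1 := by
  have hsepj : ∀ x ∈ s, ∀ y ∈ s, x ≠ y → 2 * ρ ≤ |x j - y j| := by
    intro x hx y hy hne
    by_contra! h
    refine (hsep x hx y hy hne).not_gt ((dist_pi_lt_iff (by positivity)).2 fun i => ?_)
    rw [Real.dist_eq]
    rcases eq_or_ne i j with rfl | hi
    exacts [h, hclose x hx y hy i hi]
  have hspread : ∀ x ∈ s, ∀ y ∈ s, |x j - y j| ≤ 6 * N * ρ := fun x hx y hy => by
    have h := abs_sub_le_of_mem_slab ha hj (by positivity) (hslab x hx) (hslab y hy)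
      fun i hi => (hclose x hx y hy i hi).le
    linarith
  have hinj : Set.InjOn (fun x : Fin N → ℝ => x j) s := fun x hx y hy hxy => by
    by_contra hne
    have := hsepj x hx y hy hne
    simp only at hxy
    rw [hxy, sub_self, abs_zero] at this
    linarith
  have hcard := card_le_of_separated (s := s.image fun x => x j) (by positivity : 0 < 2 * ρ)
    (by positivity : 0 ≤ 6 * N * ρ)
    (by
      simp only [Finset.mem_image]
      rintro _ ⟨x, hx, rfl⟩ _ ⟨y, hy, rfl⟩ hne
      exact hsepj x hx y hy fun h => hne (by rw [h]))
    (by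
      simp only [Finset.mem_image]
      rintro _ ⟨x, hx, rfl⟩ _ ⟨y, hy, rfl⟩
      exact hspread x hx y hy)
  rw [Finset.card_image_of_injOn hinj, show 6 * N * ρ / (2 * ρ) = 3 * N by field_simp; ring]
    at hcard
  exact_mod_cast hcard

lemma card_le_of_separated_near_hyperplane {N R : ℕ} (hN : 0 < N) {a : Fin N → ℝ}
    (ha : ∑ i, |a i| = 1) {t ρ : ℝ} (hρ : 0 < ρ) {C : Fin N → ℝ} {P : Finset (Fin N → ℝ)}
    (hbox : ∀ x ∈ P, dist x C ≤ ρ * R)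
    (hsep : ∀ x ∈ P, ∀ y ∈ P, x ≠ y → 2 * ρ ≤ dist x y)
    (hslab : ∀ x ∈ P, |∑ i, a i * x i - t| ≤ 2 * ρ) :
    P.card ≤ (3 * N + 1) * (R + 1) ^ (N - 1) := by
  obtain ⟨j, hj⟩ := exists_inv_le_abs_of_sum_abs_eq_one hN ha
  set g : (Fin N → ℝ) → {i // i ≠ j} → ℕ := fun x i => ⌊(x i - C i + ρ * R) / (2 * ρ)⌋₊
  have hcoord : ∀ x ∈ P, ∀ i, |x i - C i| ≤ ρ * R := fun x hx i =>
    (Real.dist_eq _ _ ▸ dist_le_pi_dist x C i).trans (hbox x hx)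
  have hnonneg : ∀ x ∈ P, ∀ i, 0 ≤ (x i - C i + ρ * R) / (2 * ρ) := fun x hx i =>
    div_nonneg (by linarith [neg_abs_le (x i - C i), hcoord x hx i]) (by positivity)
  have himage : P.image g ⊆ Fintype.piFinset fun _ => Finset.range (R + 1) := by
    simp only [Finset.subset_iff, Finset.mem_image, Fintype.mem_piFinset,
      Finset.mem_range_succ_iff]
    rintro _ ⟨x, hx, rfl⟩ i
    refine Nat.floor_le_of_le ((div_le_iff₀ (by positivity)).2 ?_)
    linarith [le_abs_self (x i - C i), hcoord x hx i]
  have hfiber : ∀ b ∈ P.image g, (P.filter fun x => g x = b).card ≤ 3 * N + 1 := by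
    intro b _
    refine card_le_of_separated_in_tube ha hj hρ
      (fun x hx y hy => hsep x (Finset.mem_of_mem_filter x hx) y (Finset.mem_of_mem_filter y hy))
      (fun x hx y hy i hi => ?_) (fun x hx => hslab x (Finset.mem_of_mem_filter x hx))
    obtain ⟨hxP, hgx⟩ := Finset.mem_filter.1 hx
    obtain ⟨hyP, hgy⟩ := Finset.mem_filter.1 hy
    have h := abs_sub_lt_one_of_natFloor_eq (hnonneg x hxP i) (hnonneg y hyP i)
      (congrFun (hgx.trans hgy.symm) ⟨i, hi⟩)
    rwa [← sub_div, add_sub_add_right_eq_sub, sub_sub_sub_cancel_right, abs_div,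
      abs_of_pos (by positivity : (0 : ℝ) < 2 * ρ), div_lt_one (by positivity)] at h
  calc P.card ≤ (3 * N + 1) * (P.image g).card := Finset.card_le_mul_card_image _ _ hfiber
    _ ≤ (3 * N + 1) * (R + 1) ^ (N - 1) := by
      gcongr
      refine (Finset.card_le_card himage).trans_eq ?_
      simp [Fintype.card_subtype_compl]

lemma abs_sum_mul_sub_le_dist {N : ℕ} {a : Fin N → ℝ} (ha : ∑ i, |a i| = 1) (x y : Fin N → ℝ) :
    |∑ i, a i * x i - ∑ i, a i * y i| ≤ dist x y := by
  rw [← Finset.sum_sub_distrib]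
  calc _ ≤ ∑ i, |a i| * dist x y := by
        refine (Finset.abs_sum_le_sum_abs _ _).trans (Finset.sum_le_sum fun i _ => ?_)
        rw [← mul_sub, abs_mul, ← Real.dist_eq]
        exact mul_le_mul_of_nonneg_left (dist_le_pi_dist x y i) (abs_nonneg _)
    _ = dist x y := by rw [← Finset.sum_mul, ha, one_mul]

/-! ### The simplex lemma -/

open Matrix in
lemma det_of_cons_one {n : ℕ} (y : Fin (n + 1) → Fin n → ℝ) :
    (of fun i => Fin.cons (1 : ℝ) (y i)).det = (of fun i j : Fin n => y i.succ j - y 0 j).det := by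
  set B : Matrix (Fin (n + 1)) (Fin (n + 1)) ℝ :=
    of fun i => if i = 0 then Fin.cons 1 (y 0) else Fin.cons 0 (y i - y 0)
  have hrow : (of fun i => Fin.cons (1 : ℝ) (y i)).det = B.det := by
    refine det_eq_of_forall_row_eq_smul_add_const (fun i => if i = 0 then 0 else 1) 0 rfl
      fun i j => ?_
    rcases eq_or_ne i 0 with rfl | hi
    · simp [B]
    · refine Fin.cases ?_ (fun j => ?_) j <;> simp [B, hi]
  rw [hrow, det_succ_column_zero, Fin.sum_univ_succ, Finset.sum_eq_zero fun i _ => by simp [B]]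
  have hsub : B.submatrix Fin.succ Fin.succ = of fun i j : Fin n => y i.succ j - y 0 j := by
    ext i j
    simp [B, Fin.succ_ne_zero]
  rw [Fin.succAbove_zero, hsub]
  simp [B]

lemma abs_det_of_cons_one_le {n : ℕ} {s : ℝ} (y : Fin (n + 1) → Fin n → ℝ)
    (hy : ∀ i k, |y i k - y 0 k| ≤ s) :
    |(Matrix.of fun i => Fin.cons (1 : ℝ) (y i)).det| ≤ n.factorial * s ^ n := by
  rw [det_of_cons_one]
  have h := Matrix.det_le (abv := AbsoluteValue.abs)
    (A := Matrix.of fun i j : Fin n => y i.succ j - y 0 j) fun i k => hy i.succ k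
  simpa using h

lemma one_le_prod_mul_abs_det {ι : Type*} [Fintype ι] [DecidableEq ι] {M : Matrix ι ι ℝ}
    (hM : M.det ≠ 0) {q : ι → ℝ} (hq : ∀ i, 0 < q i) {P : Matrix ι ι ℤ}
    (hP : ∀ i j, q i * M i j = P i j) :
    1 ≤ (∏ i, q i) * |M.det| := by
  have hdet : (∏ i, q i) * M.det = P.det := by
    rw [← Matrix.det_mul_column, Int.cast_det]
    congr 1
    ext i j
    exact hP i j
  have hprod : 0 < ∏ i, q i := Finset.prod_pos fun i _ => hq i
  rw [← abs_of_pos hprod, ← abs_mul, hdet, ← Int.cast_abs, ← Int.cast_one, Int.cast_le]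
  refine Int.one_le_abs fun h => hM ?_
  rw [h, Int.cast_zero, mul_eq_zero] at hdet
  exact hdet.resolve_left hprod.ne'

lemma exists_linearIndependent_fin_of_span_eq_top {K V : Type*} [Field K] [AddCommGroup V]
    [Module K V] [FiniteDimensional K V] {n : ℕ} (hn : Module.finrank K V = n) {Z : Set V}
    (hZ : Submodule.span K Z = ⊤) :
    ∃ v : Fin n → V, LinearIndependent K v ∧ ∀ i, v i ∈ Z := by
  obtain ⟨b, hbZ, hbspan, hbli⟩ := exists_linearIndependent K Z
  let basis := Module.Basis.mk hbli (by rw [Subtype.range_coe, hbspan, hZ])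
  have : Fintype b := FiniteDimensional.fintypeBasisIndex basis
  let e : Fin n ≃ b :=
    (Fintype.equivFinOfCardEq (by rw [← hn, Module.finrank_eq_card_basis basis])).symm
  exact ⟨fun i => e i, hbli.comp e e.injective, fun i => hbZ (e i).2⟩

lemma exists_sum_abs_eq_one_of_span_cons_one_ne_top {N : ℕ} {Y : Set (Fin N → ℝ)}
    (hY : Y.Nonempty)
    (hspan : Submodule.span ℝ ((fun y => Fin.cons 1 y : (Fin N → ℝ) → Fin (N + 1) → ℝ) '' Y) ≠ ⊤) :
    ∃ (a : Fin N → ℝ) (t : ℝ), ∑ i, |a i| = 1 ∧ ∀ y ∈ Y, ∑ i, a i * y i = t := by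
  obtain ⟨φ, hφ, hker⟩ := Submodule.exists_le_ker_of_lt_top _ (lt_top_iff_ne_top.2 hspan)
  set w : Fin (N + 1) → ℝ := fun i => φ fun j => if i = j then 1 else 0
  have hφw : ∀ v, φ v = ∑ i, v i * w i := fun v => by
    simp [LinearMap.pi_apply_eq_sum_univ φ v, w]
  have hY0 : ∀ y ∈ Y, w 0 + ∑ i, y i * w i.succ = 0 := fun y hy => by
    have := hker (Submodule.subset_span ⟨y, hy, rfl⟩)
    rw [LinearMap.mem_ker, hφw, Fin.sum_univ_succ] at this
    simpa using this
  set a : Fin N → ℝ := fun i => w i.succ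
  have hA : 0 < ∑ i, |a i| := by
    by_contra! hA
    have ha : ∀ i, a i = 0 := fun i => abs_eq_zero.1 <| le_antisymm
      ((Finset.single_le_sum (fun j _ => abs_nonneg (a j)) (Finset.mem_univ i)).trans hA)
      (abs_nonneg _)
    obtain ⟨y, hy⟩ := hY
    have hw0 : w 0 = 0 := by simpa [a, ha] using hY0 y hy
    refine hφ (LinearMap.ext fun v => ?_)
    rw [hφw, Fin.sum_univ_succ, hw0, mul_zero, zero_add, LinearMap.zero_apply]
    exact Finset.sum_eq_zero fun i _ => mul_eq_zero_of_right _ (ha i)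
  refine ⟨fun i => a i / ∑ j, |a j|, -w 0 / ∑ j, |a j|, ?_, fun y hy => ?_⟩
  · simp_rw [abs_div, abs_of_pos hA, ← Finset.sum_div, div_self hA.ne']
  · have h : ∑ i, a i * y i = -w 0 := by
      simp only [a, mul_comm (w _)]
      linarith [hY0 y hy]
    simp only [div_mul_eq_mul_div, ← Finset.sum_div, h]

lemma exists_hyperplane_of_rat_points {N : ℕ} (hN : 0 < N) {Y : Set (Fin N → ℝ)} {M s : ℝ}
    (hrat : ∀ y ∈ Y, ∃ (q : ℕ) (p : Fin N → ℤ), 0 < q ∧ (q : ℝ) ^ (N + 1) ≤ M ∧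
      y = fun i => (p i : ℝ) / q)
    (hdiam : ∀ y ∈ Y, ∀ z ∈ Y, dist y z ≤ s)
    (hsmall : M * (N.factorial * s ^ N) < 1) :
    ∃ (a : Fin N → ℝ) (t : ℝ), ∑ i, |a i| = 1 ∧ ∀ y ∈ Y, ∑ i, a i * y i = t := by
  rcases Y.eq_empty_or_nonempty with rfl | hY
  · refine ⟨Pi.single ⟨0, hN⟩ 1, 0, ?_, by simp⟩
    rw [Finset.sum_eq_single ⟨0, hN⟩] <;> simp +contextual
  refine exists_sum_abs_eq_one_of_span_cons_one_ne_top hY fun hspan => hsmall.not_ge ?_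
  obtain ⟨v, hv, hvY⟩ :=
    exists_linearIndependent_fin_of_span_eq_top (Module.finrank_fin_fun ℝ) hspan
  choose y hyY hvy using hvY
  choose q p hq hqM hyp using fun i => hrat (y i) (hyY i)
  have hdet : (Matrix.of fun i => Fin.cons (1 : ℝ) (y i)).det ≠ 0 := by
    refine ((Matrix.isUnit_iff_isUnit_det _).1
      (Matrix.linearIndependent_rows_iff_isUnit.1 ?_)).ne_zero
    exact (funext hvy : (Matrix.of fun i => Fin.cons (1 : ℝ) (y i)).row = v) ▸ hv
  calc 1 ≤ (∏ i, (q i : ℝ)) * |(Matrix.of fun i => Fin.cons (1 : ℝ) (y i)).det| := by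
        refine one_le_prod_mul_abs_det hdet (fun i => Nat.cast_pos.2 (hq i))
          (P := Matrix.of fun i => Fin.cons (q i : ℤ) (p i)) fun i j => ?_
        refine Fin.cases ?_ (fun k => ?_) j
        · simp
        · have hq0 : (q i : ℝ) ≠ 0 := Nat.cast_ne_zero.2 (hq i).ne'
          simp [hyp i, mul_div_cancel₀ _ hq0]
    _ ≤ M * (N.factorial * s ^ N) := by
      have hM : 0 ≤ M := (pow_nonneg (Nat.cast_nonneg _) _).trans (hqM 0)
      refine mul_le_mul ?_ (abs_det_of_cons_one_le y fun i k => ?_) (abs_nonneg _) hM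
      · refine (pow_le_pow_iff_left₀ (by positivity) hM (Nat.succ_ne_zero N)).1 ?_
        calc (∏ i, (q i : ℝ)) ^ (N + 1) = ∏ i, (q i : ℝ) ^ (N + 1) := (Finset.prod_pow _ _ _).symm
          _ ≤ ∏ _i : Fin (N + 1), M :=
            Finset.prod_le_prod (fun i _ => by positivity) fun i _ => hqM i
          _ = M ^ (N + 1) := by simp
      · exact (Real.dist_eq _ _ ▸ dist_le_pi_dist (y i) (y 0) k).trans
          (hdiam _ (hyY i) _ (hyY 0))

/-! ### Splitting structures -/

lemma SSBall.ediam_toSet_le {X : Type*} [MetricSpace X] (b : SSBall X) :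
    Metric.ediam b.toSet ≤ ENNReal.ofReal (2 * b.radius) :=
  Metric.ediam_le_of_forall_dist_le fun x hx y hy =>
    (dist_triangle_right x y b.center).trans
      (by linarith [Metric.mem_closedBall.1 hx, Metric.mem_closedBall.1 hy])

namespace SplittingStructure

variable {X : Type*} [MetricSpace X] (σ : SplittingStructure X)

lemma pow_succ_mem {u : ℕ} (hu : u ∈ σ.U) (n : ℕ) : u ^ (n + 1) ∈ σ.U := by
  induction n with
  | zero => simpa using hu
  | succ n ih => rw [pow_succ]; exact σ.mul_mem _ ih _ hu

lemma f_pow_succ {u : ℕ} (hu : u ∈ σ.U) (n : ℕ) : σ.f (u ^ (n + 1)) = σ.f u ^ (n + 1) := by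
  induction n with
  | zero => simp
  | succ n ih => rw [pow_succ, σ.f_mul _ (σ.pow_succ_mem hu n) _ hu, ih, ← pow_succ]

lemma sum_ediam_rpow_logb_le (B : SSBall X) {R : ℕ} (hR : R ∈ σ.U) (hR1 : 1 < R) (n : ℕ) :
    ∑ b : σ.S B (R ^ (n + 1)), Metric.ediam (b : SSBall X).toSet ^ Real.logb R (σ.f R)
      ≤ ENNReal.ofReal ((2 * B.radius) ^ Real.logb R (σ.f R)) := by
  set t := Real.logb R (σ.f R)
  have hρ := B.radius_pos
  have hR0 : (0 : ℝ) < R := by positivity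
  have hf : (0 : ℝ) < σ.f R := Nat.cast_pos.2 (σ.f_pos R hR)
  have ht : 0 ≤ t := Real.logb_nonneg (Nat.one_lt_cast.2 hR1) (Nat.one_le_cast.2 (σ.f_pos R hR))
  have hRt : (R : ℝ) ^ t = σ.f R := Real.rpow_logb hR0 (Nat.cast_ne_one.2 hR1.ne') hf
  calc _ ≤ ∑ _b : σ.S B (R ^ (n + 1)), ENNReal.ofReal ((2 * (B.radius / R ^ (n + 1))) ^ t) := by
        refine Finset.sum_le_sum fun b _ => ?_
        rw [← ENNReal.ofReal_rpow_of_nonneg (by positivity) ht, ← Nat.cast_pow,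
          ← σ.S_radius B _ (σ.pow_succ_mem hR n) b b.2]
        exact ENNReal.rpow_le_rpow b.1.ediam_toSet_le ht
    _ = ENNReal.ofReal ((2 * B.radius) ^ t) := by
        rw [Finset.sum_const, Finset.card_univ, Fintype.card_coe,
          σ.S_card B _ (σ.pow_succ_mem hR n), σ.f_pow_succ hR n, nsmul_eq_mul,
          ← ENNReal.ofReal_natCast, ← ENNReal.ofReal_mul (by positivity), mul_div_assoc',
          Real.div_rpow (by positivity) (by positivity), ← Real.rpow_pow_comm hR0.le, hRt]
        push_cast
        field_simp

lemma dimH_Ainfty_le_logb (B : SSBall X) {R : ℕ} (hR : R ∈ σ.U) (hR1 : 1 < R) :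
    dimH (σ.Ainfty B) ≤ ENNReal.ofReal (Real.logb R (σ.f R)) := by
  borelize X
  set t := Real.logb R (σ.f R)
  have ht : 0 ≤ t := Real.logb_nonneg (Nat.one_lt_cast.2 hR1) (Nat.one_le_cast.2 (σ.f_pos R hR))
  have hr : Tendsto (fun n : ℕ => ENNReal.ofReal (2 * (B.radius / (R : ℝ) ^ (n + 1)))) atTop
      (𝓝 0) := by
    have h := ((tendsto_pow_atTop_atTop_of_one_lt (by exact_mod_cast hR1 : (1 : ℝ) < R)).comp
      (tendsto_add_atTop_nat 1)).const_div_atTop B.radius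
    simpa using ENNReal.tendsto_ofReal (h.const_mul 2)
  have hμ : μH[t.toNNReal] (σ.Ainfty B) ≤ ENNReal.ofReal ((2 * B.radius) ^ t) := by
    rw [Real.coe_toNNReal t ht]
    refine (MeasureTheory.Measure.hausdorffMeasure_le_liminf_sum t _ _ hr
      (fun n (b : σ.S B (R ^ (n + 1))) => b.1.toSet) (Eventually.of_forall fun n b => ?_)
      (Eventually.of_forall fun n => ?_)).trans
      (liminf_le_of_frequently_le' (Frequently.of_forall (σ.sum_ediam_rpow_logb_le B hR hR1)))
    · rw [← Nat.cast_pow, ← σ.S_radius B _ (σ.pow_succ_mem hR n) b b.2]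
      exact b.1.ediam_toSet_le
    · intro x hx
      obtain ⟨b, hb, hxb⟩ := Set.mem_iUnion₂.1 (Set.mem_iInter₂.1 hx _ (σ.pow_succ_mem hR n))
      exact Set.mem_iUnion.2 ⟨⟨b, hb⟩, hxb⟩
  exact dimH_le_of_hausdorffMeasure_ne_top (ne_top_of_le_ne_top ENNReal.ofReal_ne_top hμ)

lemma rpow_le_f_of_ofReal_le_dimH (B : SSBall X) {d : ℝ}
    (hd : ENNReal.ofReal d ≤ dimH (σ.Ainfty B)) {R : ℕ} (hR : R ∈ σ.U) (hR1 : 1 < R) :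
    (R : ℝ) ^ d ≤ σ.f R := by
  have hR1' : (1 : ℝ) < R := Nat.one_lt_cast.2 hR1
  have h := hd.trans (σ.dimH_Ainfty_le_logb B hR hR1)
  rw [ENNReal.ofReal_le_ofReal_iff (Real.logb_nonneg hR1' (Nat.one_le_cast.2 (σ.f_pos R hR)))]
    at h
  calc (R : ℝ) ^ d ≤ (R : ℝ) ^ Real.logb R (σ.f R) := Real.rpow_le_rpow_of_exponent_le hR1'.le h
    _ = σ.f R := Real.rpow_logb (by positivity) hR1'.ne' (Nat.cast_pos.2 (σ.f_pos R hR))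

lemma exists_mem_forall_ge_of_eventually {P : ℕ → Prop} (h : ∀ᶠ R in atTop, P R) :
    ∃ R₀ ∈ σ.U, ∀ R ∈ σ.U, R₀ ≤ R → P R := by
  obtain ⟨M, hM⟩ := eventually_atTop.1 h
  obtain ⟨R₀, hR₀, hM₀⟩ := σ.U_infinite.exists_gt M
  exact ⟨R₀, hR₀, fun R _ hR => hM R (hM₀.le.trans hR)⟩

lemma isGenCantor_of_filter (B : SSBall X) (R : ℕ) {r : ℕ → ℕ → ℝ} (hr : ∀ m n, 0 ≤ r m n)
    (keep : ℕ → SSBall X → Prop) [∀ n, DecidablePred (keep n)] {𝓑 : ℕ → Finset (SSBall X)}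
    (h0 : 𝓑 0 = {B})
    (hsucc : ∀ n, 𝓑 (n + 1) = ((𝓑 n).biUnion fun B' => σ.S B' R).filter (keep n))
    (hcount : ∀ n, ∀ B' ∈ 𝓑 n, (((σ.S B' R).filter fun b => ¬ keep n b).card : ℝ) ≤ r n n) :
    σ.IsGenCantor B (fun _ => R) r (⋂ n, ⋃ b ∈ 𝓑 n, b.toSet) := by
  refine ⟨𝓑, h0, fun n => ?_, rfl⟩
  set removed := ((𝓑 n).biUnion fun B' => σ.S B' R).filter fun b : SSBall X => ¬ keep n b
  refine ⟨fun k => if k = 0 then removed else ∅, fun k _ => ?_, fun k _ B' hB' => ?_, ?_⟩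
  · dsimp only
    split_ifs with hk
    · subst hk
      simp only [zero_add, Finset.prod_range_one, Nat.sub_zero]
      exact Finset.filter_subset _ _
    · exact Finset.empty_subset _
  · dsimp only
    split_ifs with hk
    · subst hk
      simp only [zero_add, Finset.prod_range_one, Nat.sub_zero] at hB' ⊢
      refine le_trans (Nat.cast_le.2 (Finset.card_le_card fun b hb => ?_)) (hcount n B' hB')
      simp only [Finset.mem_inter, Finset.mem_filter, removed] at hb ⊢
      exact ⟨hb.2, hb.1.2⟩
    · simpa using hr _ _
  · have hremoved : (Finset.range (n + 1)).biUnion (fun k => if k = 0 then removed else ∅)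
        = removed := by
      ext b
      simp [apply_ite (b ∈ ·)]
    rw [hremoved, hsucc]
    ext b
    simp only [Finset.mem_filter, Finset.mem_sdiff, removed]
    tauto

end SplittingStructure

/-! ### The Cantor set inside `Bad_N` -/

lemma rpow_add_one_div_pow {N : ℕ} (hN : 0 < N) {x : ℝ} (hx : 0 ≤ x) :
    (x ^ (((N : ℝ) + 1) / N)) ^ N = x ^ (N + 1) := by
  rw [← Real.rpow_natCast, ← Real.rpow_mul hx, div_mul_cancel₀ _ (by positivity), ← Nat.cast_succ,
    Real.rpow_natCast]

lemma rpow_neg_inv_div_self {N : ℕ} (hN : 0 < N) {x : ℝ} (hx : 0 < x) :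
    x ^ (-(1 : ℝ) / N) / x = 1 / x ^ (((N : ℝ) + 1) / N) := by
  rw [div_eq_mul_inv, ← Real.rpow_neg_one x, ← Real.rpow_add hx, one_div, ← Real.rpow_neg hx.le]
  congr 1
  field_simp
  ring

noncomputable def genRadius (R n : ℕ) : ℝ := 1 / 2 / (R : ℝ) ^ n

lemma genRadius_pos {R : ℕ} (hR : 0 < R) (n : ℕ) : 0 < genRadius R n := by
  unfold genRadius; positivity

lemma genRadius_succ (R n : ℕ) : genRadius R (n + 1) = genRadius R n / R := by
  simp only [genRadius, pow_succ]
  ring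

/-- The window `q^((N+1)/N) ∈ [R^(n-2), R^(n-1))` is written as `R^2 q^((N+1)/N) ∈ [R^n, R^(n+1))`
to avoid truncated subtraction; for `n < 2` it contains no `q`. -/
def dangerousPoints (N R n : ℕ) (B : SSBall (Fin N → ℝ)) : Set (Fin N → ℝ) :=
  {y | ∃ (q : ℕ) (p : Fin N → ℤ), y = (fun i => (p i : ℝ) / q) ∧
    (R : ℝ) ^ 2 * (q : ℝ) ^ (((N : ℝ) + 1) / N) ∈ Set.Ico ((R : ℝ) ^ n) ((R : ℝ) ^ (n + 1)) ∧
    (Metric.closedBall y (genRadius R 3 / (q : ℝ) ^ (((N : ℝ) + 1) / N)) ∩ B.toSet).Nonempty}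

def IsDangerous (N R n : ℕ) (b : SSBall (Fin N → ℝ)) : Prop := (dangerousPoints N R n b).Nonempty

lemma genRadius_div_le {N R n q : ℕ} (hR : 0 < R)
    (hq : (R : ℝ) ^ n ≤ R ^ 2 * (q : ℝ) ^ (((N : ℝ) + 1) / N)) :
    genRadius R 3 / (q : ℝ) ^ (((N : ℝ) + 1) / N) ≤ genRadius R (n + 1) := by
  have hR0 : (0 : ℝ) < R := Nat.cast_pos.2 hR
  have hQ : 0 < (q : ℝ) ^ (((N : ℝ) + 1) / N) := by
    by_contra! h
    have : (R : ℝ) ^ 2 * (q : ℝ) ^ (((N : ℝ) + 1) / N) ≤ 0 :=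
      mul_nonpos_of_nonneg_of_nonpos (by positivity) h
    linarith [pow_pos hR0 n]
  simp only [genRadius, div_div]
  refine one_div_le_one_div_of_le (by positivity) ?_
  calc 2 * (R : ℝ) ^ (n + 1) = 2 * (R ^ n * R) := by ring
    _ ≤ 2 * (R ^ 2 * (q : ℝ) ^ (((N : ℝ) + 1) / N) * R) := by gcongr
    _ = 2 * R ^ 3 * (q : ℝ) ^ (((N : ℝ) + 1) / N) := by ring

lemma dangerousPoints_mono {N R n : ℕ} {b B : SSBall (Fin N → ℝ)} (h : b.toSet ⊆ B.toSet) :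
    dangerousPoints N R n b ⊆ dangerousPoints N R n B := by
  rintro y ⟨q, p, rfl, hwin, z, hz, hzb⟩
  exact ⟨q, p, rfl, hwin, z, hz, h hzb⟩

lemma dist_center_le_of_mem_dangerousPoints {N R n : ℕ} (hR : 0 < R) {B : SSBall (Fin N → ℝ)}
    {y : Fin N → ℝ} (hy : y ∈ dangerousPoints N R n B) :
    dist y B.center ≤ genRadius R (n + 1) + B.radius := by
  obtain ⟨q, p, rfl, hwin, z, hz, hzB⟩ := hy
  calc _ ≤ dist (fun i => (p i : ℝ) / q) z + dist z B.center := dist_triangle _ _ _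
    _ ≤ genRadius R (n + 1) + B.radius := by
      rw [dist_comm]
      exact add_le_add ((Metric.mem_closedBall.1 hz).trans (genRadius_div_le hR hwin.1)) hzB

lemma exists_rat_of_mem_dangerousPoints {N R n : ℕ} (hN : 0 < N) (hR : 0 < R)
    {B : SSBall (Fin N → ℝ)} {y : Fin N → ℝ} (hy : y ∈ dangerousPoints N R n B) :
    ∃ (q : ℕ) (p : Fin N → ℤ), 0 < q ∧ (q : ℝ) ^ (N + 1) ≤ ((R : ℝ) ^ (n + 1) / R ^ 2) ^ N ∧
      y = fun i => (p i : ℝ) / q := by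
  obtain ⟨q, p, rfl, ⟨hlow, hupp⟩, -⟩ := hy
  have hR0 : (0 : ℝ) < R := Nat.cast_pos.2 hR
  refine ⟨q, p, Nat.pos_of_ne_zero fun hq => ?_, ?_, rfl⟩
  · rw [hq, Nat.cast_zero, Real.zero_rpow (by positivity), mul_zero] at hlow
    exact (pow_pos hR0 n).not_ge hlow
  · rw [← rpow_add_one_div_pow hN (Nat.cast_nonneg q)]
    exact pow_le_pow_left₀ (by positivity) ((le_div_iff₀' (by positivity)).2 hupp.le) N

lemma factorial_mul_pow_lt_one {N R : ℕ} (hN : 0 < N) (hRN : 2 * N.factorial < R) :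
    (N.factorial : ℝ) * (2 / R) ^ N < 1 := by
  have hR : (2 * N.factorial : ℝ) < R := by exact_mod_cast hRN
  have hR0 : (0 : ℝ) < R := lt_of_le_of_lt (by positivity) hR
  have h2R : 2 / (R : ℝ) ≤ 1 :=
    (div_le_one hR0).2 (by linarith [(Nat.one_le_cast (α := ℝ)).2 N.factorial_pos])
  calc (N.factorial : ℝ) * (2 / R) ^ N ≤ N.factorial * (2 / R) :=
        mul_le_mul_of_nonneg_left (pow_le_of_le_one (by positivity) h2R hN.ne') (by positivity)
    _ < 1 := by rw [mul_div_assoc', div_lt_one hR0]; linarith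

lemma exists_hyperplane_dangerousPoints {N R n : ℕ} (hN : 0 < N) (hRN : 2 * N.factorial < R)
    {B : SSBall (Fin N → ℝ)} (hB : B.radius = genRadius R n) :
    ∃ (a : Fin N → ℝ) (t : ℝ), ∑ i, |a i| = 1 ∧
      ∀ y ∈ dangerousPoints N R n B, ∑ i, a i * y i = t := by
  have hR : 0 < R := lt_of_le_of_lt (Nat.zero_le _) hRN
  have hR0 : (0 : ℝ) < R := Nat.cast_pos.2 hR
  have hsucc : genRadius R (n + 1) ≤ genRadius R n := by
    rw [genRadius_succ]
    exact div_le_self (genRadius_pos hR n).le (Nat.one_le_cast.2 hR)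
  refine exists_hyperplane_of_rat_points hN (s := 4 * genRadius R n)
    (fun y hy => exists_rat_of_mem_dangerousPoints hN hR hy) (fun y hy z hz => ?_) ?_
  · have hy' := dist_center_le_of_mem_dangerousPoints hR hy
    have hz' := dist_center_le_of_mem_dangerousPoints hR hz
    rw [hB] at hy' hz'
    linarith [dist_triangle_right y z B.center]
  · have h : (R : ℝ) ^ (n + 1) / R ^ 2 * (4 * genRadius R n) = 2 / R := by
      simp only [genRadius]
      field_simp
      ring
    rw [mul_left_comm, ← mul_pow, h]
    exact factorial_mul_pow_lt_one hN hRN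

lemma card_filter_isDangerous_le {N : ℕ} (hN : 0 < N) (σ : SplittingStructure (Fin N → ℝ))
    {R : ℕ} (hR : R ∈ σ.U) (hRN : 2 * N.factorial < R) {n : ℕ} {B : SSBall (Fin N → ℝ)}
    (hB : B.radius = genRadius R n) :
    ((σ.S B R).filter (IsDangerous N R n)).card ≤ (3 * N + 1) * (R + 1) ^ (N - 1) := by
  have hR0 : 0 < R := lt_of_le_of_lt (Nat.zero_le _) hRN
  have hρ := genRadius_pos hR0 (n + 1)
  obtain ⟨a, t, ha, hat⟩ := exists_hyperplane_dangerousPoints hN hRN hB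
  have hrad : ∀ b ∈ σ.S B R, b.radius = genRadius R (n + 1) := fun b hb => by
    rw [σ.S_radius B R hR b hb, hB, genRadius_succ]
  have hsep : ∀ b₁ ∈ σ.S B R, ∀ b₂ ∈ σ.S B R, b₁ ≠ b₂ →
      2 * genRadius R (n + 1) ≤ dist b₁.center b₂.center := fun b₁ h₁ b₂ h₂ hne => by
    simpa [genRadius_succ, hB, mul_div_assoc] using σ.S_sep B R hR b₁ h₁ b₂ h₂ hne
  have hinj :
      Set.InjOn (SSBall.center (X := Fin N → ℝ)) ((σ.S B R).filter (IsDangerous N R n)) := by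
    intro b₁ h₁ b₂ h₂ h
    by_contra hne
    have := hsep b₁ (Finset.mem_filter.1 h₁).1 b₂ (Finset.mem_filter.1 h₂).1 hne
    rw [h, dist_self] at this
    linarith
  rw [← Finset.card_image_of_injOn hinj]
  refine card_le_of_separated_near_hyperplane hN ha hρ (t := t) (C := B.center) ?_ ?_ ?_ <;>
    simp only [Finset.mem_image, Finset.mem_filter]
  · rintro _ ⟨b, ⟨hb, -⟩, rfl⟩
    rw [genRadius_succ, div_mul_cancel₀ _ (Nat.cast_pos.2 hR0).ne', ← hB]
    exact σ.S_subset B R hR b hb (Metric.mem_closedBall_self b.radius_pos.le)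
  · rintro _ ⟨b₁, ⟨h₁, -⟩, rfl⟩ _ ⟨b₂, ⟨h₂, -⟩, rfl⟩ hne
    exact hsep b₁ h₁ b₂ h₂ fun h => hne (h ▸ rfl)
  · rintro _ ⟨b, ⟨hb, y, hy⟩, rfl⟩
    have hyB := dangerousPoints_mono (σ.S_subset B R hR b hb) hy
    rw [← hat y hyB]
    refine (abs_sum_mul_sub_le_dist ha _ _).trans ?_
    rw [dist_comm]
    linarith [dist_center_le_of_mem_dangerousPoints hR0 hy, hrad b hb]

noncomputable def cantorStage (N : ℕ) (σ : SplittingStructure (Fin N → ℝ)) (R : ℕ) :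
    ℕ → Finset (SSBall (Fin N → ℝ))
  | 0 => {unitBox N}
  | n + 1 => ((cantorStage N σ R n).biUnion fun B => σ.S B R).filter fun b => ¬ IsDangerous N R n b

lemma radius_of_mem_cantorStage {N : ℕ} (σ : SplittingStructure (Fin N → ℝ)) {R : ℕ}
    (hR : R ∈ σ.U) {n : ℕ} {b : SSBall (Fin N → ℝ)} (hb : b ∈ cantorStage N σ R n) :
    b.radius = genRadius R n := by
  induction n generalizing b with
  | zero =>
    rw [Finset.mem_singleton.1 hb]
    norm_num [unitBox, genRadius]
  | succ n ih =>
    obtain ⟨B, hB, hbB⟩ := Finset.mem_biUnion.1 (Finset.mem_filter.1 hb).1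
    rw [σ.S_radius B R hR b hbB, ih hB, genRadius_succ]

lemma isGenCantor_cantorStage {N : ℕ} (hN : 0 < N) (σ : SplittingStructure (Fin N → ℝ))
    {R : ℕ} (hR : R ∈ σ.U) (hRN : 2 * N.factorial < R) {r : ℕ → ℕ → ℝ} (hr : ∀ m n, 0 ≤ r m n)
    (hbudget : ∀ n, (((3 * N + 1) * (R + 1) ^ (N - 1) : ℕ) : ℝ) ≤ r n n) :
    σ.IsGenCantor (unitBox N) (fun _ => R) r (⋂ n, ⋃ b ∈ cantorStage N σ R n, b.toSet) :=
  σ.isGenCantor_of_filter (unitBox N) R hr (fun n b => ¬ IsDangerous N R n b) rfl (fun _ => rfl)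
    fun n B hB => by
    simp only [not_not]
    exact (Nat.cast_le.2 (card_filter_isDangerous_le hN σ hR hRN
      (radius_of_mem_cantorStage σ hR hB))).trans (hbudget n)

lemma dist_round_div_le {N q : ℕ} (hq : 0 < q) {x : Fin N → ℝ} {ε : ℝ} (hε : 0 ≤ ε)
    (hx : ∀ i, intDist (q * x i) ≤ ε) :
    dist x (fun i => (round (q * x i) : ℝ) / q) ≤ ε / q := by
  have hq0 : (0 : ℝ) < q := Nat.cast_pos.2 hq
  refine (dist_pi_le_iff (by positivity)).2 fun i => ?_
  rw [Real.dist_eq, show x i - round (q * x i) / q = (q * x i - round (q * x i)) / q by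
    field_simp, abs_div, abs_of_pos hq0]
  exact div_le_div_of_nonneg_right (hx i) hq0.le

lemma iInter_cantorStage_subset_badN {N : ℕ} (hN : 0 < N) (σ : SplittingStructure (Fin N → ℝ))
    {R : ℕ} (hR : 1 < R) : ⋂ n, ⋃ b ∈ cantorStage N σ R n, b.toSet ⊆ badN N := by
  intro x hx
  refine ⟨genRadius R 3, genRadius_pos (by omega) 3, fun q hq => ?_⟩
  by_contra! hclose
  have hq1 : (1 : ℝ) ≤ q := Nat.one_le_cast.2 hq
  obtain ⟨n, hwin⟩ := exists_nat_pow_near (x := (R : ℝ) ^ 2 * (q : ℝ) ^ (((N : ℝ) + 1) / N))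
    (one_le_mul_of_one_le_of_one_le (one_le_pow₀ (Nat.one_le_cast.2 hR.le))
      (Real.one_le_rpow hq1 (by positivity))) (Nat.one_lt_cast.2 hR)
  obtain ⟨b, hb, hxb⟩ := Set.mem_iUnion₂.1 (Set.mem_iInter.1 hx (n + 1))
  refine (Finset.mem_filter.1 hb).2 ⟨_, q, fun i => round (q * x i), rfl, hwin, x, ?_, hxb⟩
  rw [Metric.mem_closedBall, div_eq_mul_one_div, ← rpow_neg_inv_div_self hN (Nat.cast_pos.2 hq),
    ← mul_div_assoc]
  exact dist_round_div_le hq (mul_nonneg (genRadius_pos (by omega) 3).le (by positivity))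
    fun i => (hclose i).le

lemma eventually_mul_add_one_pow_le_rpow {k : ℕ} {e : ℝ} (he : (k : ℝ) < e) {K : ℝ}
    (hK : 0 ≤ K) : ∀ᶠ R : ℕ in atTop, K * ((R : ℝ) + 1) ^ k ≤ (R : ℝ) ^ e := by
  filter_upwards [eventually_ge_atTop 1, ((tendsto_rpow_atTop (sub_pos.2 he)).comp
    tendsto_natCast_atTop_atTop).eventually_ge_atTop (K * 2 ^ k)] with R hR hRe
  have hR' : (1 : ℝ) ≤ R := Nat.one_le_cast.2 hR
  calc K * ((R : ℝ) + 1) ^ k ≤ K * (2 * R) ^ k := by gcongr; linarith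
    _ = K * 2 ^ k * (R : ℝ) ^ k := by ring
    _ ≤ (R : ℝ) ^ (e - k) * (R : ℝ) ^ k := by gcongr; exact hRe
    _ = (R : ℝ) ^ e := by
      rw [← Real.rpow_natCast, ← Real.rpow_add (by positivity), sub_add_cancel]

lemma badN_cantorWinningOn_of_ofReal_le_dimH {N : ℕ} (hN : 0 < N)
    (σ : SplittingStructure (Fin N → ℝ)) {d : ℝ}
    (hd : ENNReal.ofReal d ≤ dimH (σ.Ainfty (unitBox N))) (hdN : (N : ℝ) - 1 < d) :
    σ.CantorWinningOn ((d - N + 1) / d) (unitBox N) (badN N) := by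
  intro ε _ hεd
  have hN1 : (1 : ℝ) ≤ N := Nat.one_le_cast.2 hN
  have hd0 : 0 < d := by linarith
  have hε1 : ε ≤ 1 := hεd.le.trans ((div_le_one hd0).2 (by linarith))
  have hexp : ((N - 1 : ℕ) : ℝ) < d * (1 - ε) := by
    rw [lt_div_iff₀ hd0] at hεd
    rw [Nat.cast_sub hN, Nat.cast_one]
    linarith
  obtain ⟨R₀, hR₀, hlarge⟩ := σ.exists_mem_forall_ge_of_eventually
    ((eventually_gt_atTop (2 * N.factorial)).and
      (eventually_mul_add_one_pow_le_rpow hexp (by positivity : (0 : ℝ) ≤ 3 * N + 1)))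
  refine ⟨R₀, hR₀, fun R hR hR₀R => ?_⟩
  obtain ⟨hRN, hbudget⟩ := hlarge R hR hR₀R
  have hR1 : 1 < R := by have := N.factorial_pos; omega
  refine ⟨_, isGenCantor_cantorStage hN σ hR hRN (fun m n => by positivity) fun n => ?_,
    iInter_cantorStage_subset_badN hN σ hR1⟩
  calc (((3 * N + 1) * (R + 1) ^ (N - 1) : ℕ) : ℝ) = (3 * N + 1) * ((R : ℝ) + 1) ^ (N - 1) := by
        push_cast; ring
    _ ≤ (R : ℝ) ^ (d * (1 - ε)) := hbudget
    _ = ((R : ℝ) ^ d) ^ (1 - ε) := Real.rpow_mul (Nat.cast_nonneg R) _ _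
    _ ≤ (σ.f R : ℝ) ^ (1 - ε) := Real.rpow_le_rpow (by positivity)
        (σ.rpow_le_f_of_ofReal_le_dimH _ hd hR hR1) (by linarith)
    _ = (σ.f R : ℝ) ^ (((n : ℝ) - n + 1) * (1 - ε)) := by rw [sub_self, zero_add, one_mul]

/-! ### The canonical splitting structure -/

lemma exists_fin_le_le_add_one {u : ℕ} (hu : 0 < u) {s : ℝ} (hs0 : 0 ≤ s) (hsu : s ≤ u) :
    ∃ m : Fin u, (m : ℝ) ≤ s ∧ s ≤ m + 1 := by
  rcases lt_or_ge ⌊s⌋₊ u with h | h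
  · exact ⟨⟨⌊s⌋₊, h⟩, Nat.floor_le hs0, (Nat.lt_floor_add_one s).le⟩
  · have hs : s = u := le_antisymm hsu (le_trans (Nat.cast_le.2 h) (Nat.floor_le hs0))
    refine ⟨⟨u - 1, by omega⟩, ?_, ?_⟩ <;> simp [hs, Nat.cast_sub hu]

lemma exists_mem_canonicalPieceRN {N u : ℕ} (hu : 0 < u) {B : SSBall (Fin N → ℝ)}
    {x : Fin N → ℝ} (hx : x ∈ B.toSet) :
    ∃ i : Fin N → Fin u, x ∈ (canonicalPieceRN N B u hu i).toSet := by
  have hr := B.radius_pos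
  have hu0 : (0 : ℝ) < u := Nat.cast_pos.2 hu
  have hρ : 0 < B.radius / u := by positivity
  set s : Fin N → ℝ := fun j => (x j - (B.center j - B.radius)) / (2 * (B.radius / u))
  have hs : ∀ j, 0 ≤ s j ∧ s j ≤ u := fun j => by
    have hj := abs_le.1 ((Real.dist_eq _ _ ▸ dist_le_pi_dist x B.center j).trans hx)
    constructor
    · exact div_nonneg (by linarith) (by positivity)
    · rw [div_le_iff₀ (by positivity), mul_left_comm, mul_div_cancel₀ _ hu0.ne']
      linarith
  choose m hm using fun j => exists_fin_le_le_add_one hu (hs j).1 (hs j).2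
  refine ⟨m, (dist_pi_le_iff hρ.le).2 fun j => ?_⟩
  have hxj : x j = B.center j - B.radius + s j * (2 * (B.radius / u)) := by
    simp only [s]
    field_simp
    ring
  rw [Real.dist_eq, abs_le, hxj]
  simp only [canonicalPieceRN]
  constructor <;> nlinarith [(hm j).1, (hm j).2]

lemma dimH_Ainfty_unitBox_of_isCanonicalRN {N : ℕ} {σ : SplittingStructure (Fin N → ℝ)}
    (hσ : IsCanonicalRN N σ) : dimH (σ.Ainfty (unitBox N)) = N := by
  obtain ⟨hU, -, hS⟩ := hσ
  refine le_antisymm ((dimH_mono (Set.subset_univ _)).trans_eq (Real.dimH_univ_pi_fin N)) ?_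
  have hbox : (unitBox N).toSet ⊆ σ.Ainfty (unitBox N) := by
    intro x hx
    refine Set.mem_iInter₂.2 fun u hu => ?_
    rw [hU] at hu
    obtain ⟨i, hi⟩ := exists_mem_canonicalPieceRN hu hx
    exact Set.mem_iUnion₂.2
      ⟨_, (hS _ u hu).symm ▸ Finset.mem_image_of_mem _ (Finset.mem_univ i), hi⟩
  calc (N : ENNReal) = dimH (unitBox N).toSet := by
        rw [SSBall.toSet,
          Real.dimH_of_mem_nhds (Metric.closedBall_mem_nhds _ (unitBox N).radius_pos),
          Module.finrank_fin_fun]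
    _ ≤ _ := dimH_mono hbox

/-- For any splitting structure on `ℝ^N` (sup-norm metric) with
`d = dimH A_∞(B) > N - 1` for the unit box `B = [0,1]^N`, the set `Bad_N` is
`((d-N+1)/d)`-Cantor-winning on `B`; in particular, for the canonical splitting
structure `Bad_N` is `(1/N)`-Cantor-winning on `B`. -/
theorem badN_cantorWinning (N : ℕ) (hN : 0 < N)
    (σ : SplittingStructure (Fin N → ℝ))
    (d : ℝ) (hd : dimH (σ.Ainfty (unitBox N)) = ENNReal.ofReal d)
    (hdgt : (N : ℝ) - 1 < d) :
    σ.CantorWinningOn ((d - (N : ℝ) + 1) / d) (unitBox N) (badN N) ∧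
    (IsCanonicalRN N σ →
      σ.CantorWinningOn (1 / (N : ℝ)) (unitBox N) (badN N)) := by
  have hwin := badN_cantorWinningOn_of_ofReal_le_dimH hN σ hd.ge hdgt
  refine ⟨hwin, fun hσ => ?_⟩
  have hdN : d = N := by
    have h := hd.symm.trans (dimH_Ainfty_unitBox_of_isCanonicalRN hσ)
    rw [← ENNReal.ofReal_natCast] at h
    have hN1 : (1 : ℝ) ≤ N := Nat.one_le_cast.2 hN
    exact (ENNReal.ofReal_eq_ofReal_iff (by linarith) (Nat.cast_nonneg N)).1 h
  rwa [hdN, sub_self, zero_add] at hwin
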